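/- Suppose for each player i and each step h there are state-action occupancy measures λ_{i,h}^{π_i} ∈ Δ(S_i × A_i) depending only on player i's own strategy π_i (decoupled dynamics), and rewards decompose as V_i(π) = ∑_{h=1}^H ⟨r_{i,h}, ⊗_j λ_{j,h}^{π_j}⟩. If for each h there is a function φ_h : S × A → ℝ such that for all i and all (s,a), (s_i′, a_i′): r_{i,h}(s_i′, s_{−i}, a_i′, a_{−i}) − r_{i,h}(s, a) = φ_h(s_i′, s_{−i}, a_i′, a_{−i}) − φ_h(s, a), then Φ(π) := ∑_{h=1}^H ⟨φ_h, ⊗_j λ_{j,h}^{π_j}⟩ is an exact potential: V_i(π) − V_i(π_i′, π_{−i}) = Φ(π) − Φ(π_i′, π_{−i}) for all i, π, π_i′. -/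
import Mathlib

private lemma aux_inv {N : ℕ} {T : Fin N → Type*} [∀ j, Fintype (T j)]
    (i : Fin N) (μ ν : ∀ j, T j → ℝ)
    (hμν : ∀ j, j ≠ i → μ j = ν j)
    (hμ1 : ∑ w, μ i w = 1) (hν1 : ∑ w, ν i w = 1)
    (f : (∀ j, T j) → ℝ)
    (hf : ∀ (z : ∀ j, T j) (w : T i), f (Function.update z i w) = f z) :
    ∑ z : ∀ j, T j, (∏ j, μ j (z j)) * f z
      = ∑ z : ∀ j, T j, (∏ j, ν j (z j)) * f z := by
  classical
  have hinv : Function.Involutive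
      (fun p : (∀ j, T j) × T i => (Function.update p.1 i p.2, p.1 i)) := by
    intro p
    ext <;> simp [Function.update_idem]
  have hsplit : ∀ (g : ∀ j, T j → ℝ) (z : ∀ j, T j),
      ∏ j, g j (z j) = g i (z i) * ∏ j ∈ Finset.univ.erase i, g j (z j) :=
    fun g z => (Finset.mul_prod_erase _ _ (Finset.mem_univ i)).symm
  have herase : ∀ (g : ∀ j, T j → ℝ) (z : ∀ j, T j) (w : T i),
      ∏ j ∈ Finset.univ.erase i, g j (Function.update z i w j)
        = ∏ j ∈ Finset.univ.erase i, g j (z j) := by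
    intro g z w
    refine Finset.prod_congr rfl fun j hj => ?_
    rw [Function.update_of_ne (Finset.ne_of_mem_erase hj)]
  have heraseμν : ∀ (z : ∀ j, T j),
      ∏ j ∈ Finset.univ.erase i, μ j (z j)
        = ∏ j ∈ Finset.univ.erase i, ν j (z j) := by
    intro z
    refine Finset.prod_congr rfl fun j hj => ?_
    rw [hμν j (Finset.ne_of_mem_erase hj)]
  calc
    ∑ z : ∀ j, T j, (∏ j, μ j (z j)) * f z
        = ∑ p : (∀ j, T j) × T i, ν i p.2 * ((∏ j, μ j (p.1 j)) * f p.1) := by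
          rw [Fintype.sum_prod_type]
          refine Finset.sum_congr rfl fun z _ => ?_
          simp [← Finset.sum_mul, hν1]
    _ = ∑ p : (∀ j, T j) × T i, μ i p.2 * ((∏ j, ν j (p.1 j)) * f p.1) := by
          refine (Fintype.sum_bijective _ hinv.bijective _ _ fun p => ?_)
          obtain ⟨z, w⟩ := p
          simp only
          rw [hsplit μ z, hsplit ν (Function.update z i w),
            herase ν z w, Function.update_self, hf z w, heraseμν z]
          ring
    _ = ∑ z : ∀ j, T j, (∏ j, ν j (z j)) * f z := by
          rw [Fintype.sum_prod_type]
          refine Finset.sum_congr rfl fun z _ => ?_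
          simp [← Finset.sum_mul, hμ1]

theorem stmt_8 {N : ℕ} {S A : Fin N → Type*}
    [∀ i, Fintype (S i)] [∀ i, Fintype (A i)]
    [∀ i, DecidableEq (S i)] [∀ i, DecidableEq (A i)]
    {Pstr : Fin N → Type*}
    (H : ℕ)
    (lam : ∀ i, Pstr i → ℕ → (S i × A i) → ℝ)
    (hlam0 : ∀ i (πi : Pstr i) (h : ℕ) z, 0 ≤ lam i πi h z)
    (hlam1 : ∀ i (πi : Pstr i) (h : ℕ), ∑ z, lam i πi h z = 1)
    (r : Fin N → ℕ → (∀ j, S j × A j) → ℝ)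
    (φ : ℕ → (∀ j, S j × A j) → ℝ)
    (hpot : ∀ (i : Fin N) (h : ℕ) (z : ∀ j, S j × A j) (zi' : S i × A i),
      r i h (Function.update z i zi') - r i h z =
        φ h (Function.update z i zi') - φ h z)
    (V : Fin N → (∀ j, Pstr j) → ℝ)
    (hV : ∀ i π, V i π =
      ∑ h ∈ Finset.range H, ∑ z : ∀ j, S j × A j,
        (∏ j, lam j (π j) h (z j)) * r i h z)
    (Φ : (∀ j, Pstr j) → ℝ)
    (hΦ : ∀ π, Φ π =
      ∑ h ∈ Finset.range H, ∑ z : ∀ j, S j × A j,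
        (∏ j, lam j (π j) h (z j)) * φ h z) :
    ∀ (i : Fin N) (π : ∀ j, Pstr j) (πi' : Pstr i),
      V i π - V i (Function.update π i πi') =
        Φ π - Φ (Function.update π i πi') := by
  intro i π πi'
  set π' := Function.update π i πi' with hπ'
  have key : ∀ (σ : ∀ j, Pstr j), V i σ - Φ σ =
      ∑ h ∈ Finset.range H, ∑ z : ∀ j, S j × A j,
        (∏ j, lam j (σ j) h (z j)) * (r i h z - φ h z) := by
    intro σ
    rw [hV, hΦ, ← Finset.sum_sub_distrib]
    refine Finset.sum_congr rfl fun h _ => ?_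
    rw [← Finset.sum_sub_distrib]
    refine Finset.sum_congr rfl fun z _ => ?_
    ring
  have main : V i π - Φ π = V i π' - Φ π' := by
    rw [key, key]
    refine Finset.sum_congr rfl fun h _ => ?_
    refine aux_inv i (fun j => lam j (π j) h) (fun j => lam j (π' j) h)
      (fun j hj => by simp [hπ', Function.update_of_ne hj])
      (hlam1 i (π i) h) (by simpa [hπ'] using hlam1 i πi' h)
      _ (fun z w => ?_)
    have := hpot i h z w
    linarith
  linarith
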